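/- For d = 0, the minimal-time function of the reduced problem equals V₀(x) = r·T(x₁) + (1-r)·T(x₂) for all x ∈ ℝ₊², where T(σ) = max(0, ∫_{s̲}^{σ} dξ/γ(ξ)). -/

import Mathlib

/-!
Lower bound: along any admissible trajectory, `τ ↦ r T(s₁ τ) + (1 - r) T(s₂ τ) + τ` is
nondecreasing. Indeed `μ(w) (s - w) ≤ γ(s)` for every admissible `w`, so the weighted travel time
of each zone decreases at rate at most its share `a`, resp. `1 - a`, of the treatment. Since `T`
has a kink at `s̲`, monotonicity is read off lower right Dini derivatives rather than derivatives.

Upper bound: treating the zones one after the other, each at the maximal rate `γ`, follows `T`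
exactly. Such a trajectory is the inverse of `∫ dξ/γ(ξ)` run backwards along a clock whose speed
ramps up from `0` and back down to `0`, which makes it differentiable at the switching instants at
the cost of an arbitrarily small extra time.
-/

open Set Filter Topology MeasureTheory

namespace Depollution

variable {μ γ : ℝ → ℝ}

def IsMaxRate (μ γ : ℝ → ℝ) : Prop :=
  ∀ σ > (0:ℝ), IsGreatest ((fun s : ℝ => μ s * (σ - s)) '' Icc 0 σ) (γ σ)

section MaxRate

theorem mu_nonneg (hmono : StrictMonoOn μ (Ici 0)) (h0 : μ 0 = 0) {s : ℝ} (hs : 0 ≤ s) :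
    0 ≤ μ s :=
  h0 ▸ hmono.monotoneOn self_mem_Ici hs hs

theorem mu_pos (hmono : StrictMonoOn μ (Ici 0)) (h0 : μ 0 = 0) {s : ℝ} (hs : 0 < s) : 0 < μ s :=
  h0 ▸ hmono self_mem_Ici hs.le hs

theorem IsMaxRate.mul_sub_le (hγ : IsMaxRate μ γ) {σ s : ℝ} (hσ : 0 < σ) (hs : s ∈ Icc 0 σ) :
    μ s * (σ - s) ≤ γ σ :=
  (hγ σ hσ).2 ⟨s, hs, rfl⟩

theorem IsMaxRate.pos (hγ : IsMaxRate μ γ) (hmono : StrictMonoOn μ (Ici 0)) (h0 : μ 0 = 0)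
    {σ : ℝ} (hσ : 0 < σ) : 0 < γ σ :=
  calc 0 < μ (σ / 2) * (σ - σ / 2) := mul_pos (mu_pos hmono h0 (by linarith)) (by linarith)
    _ ≤ γ σ := hγ.mul_sub_le hσ ⟨by linarith, by linarith⟩

theorem IsMaxRate.mul_sub_le_of_nonneg (hγ : IsMaxRate μ γ) (hmono : StrictMonoOn μ (Ici 0))
    (h0 : μ 0 = 0) {σ w : ℝ} (hσ : 0 < σ) (hw : 0 ≤ w) : μ w * (σ - w) ≤ γ σ := by
  rcases le_or_gt w σ with h | h
  · exact hγ.mul_sub_le hσ ⟨hw, h⟩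
  · exact (mul_nonpos_of_nonneg_of_nonpos (mu_nonneg hmono h0 hw) (by linarith)).trans
      (hγ.pos hmono h0 hσ).le

-- Writing `s = σ θ` with `θ ∈ [0, 1]` makes the constraint set independent of `σ`.
theorem IsMaxRate.continuousOn (hμ : Continuous μ) (hγ : IsMaxRate μ γ) :
    ContinuousOn γ (Ioi 0) := by
  have hsup : Continuous fun σ => sSup ((fun θ => μ (σ * θ) * (σ - σ * θ)) '' Icc 0 1) :=
    isCompact_Icc.continuous_sSup (by fun_prop)
  refine hsup.continuousOn.congr fun σ (hσ : 0 < σ) => ?_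
  have hIcc : Icc 0 σ = (σ * ·) '' Icc 0 1 := by
    rw [image_mul_left_Icc hσ.le zero_le_one, mul_zero, mul_one]
  rw [← (hγ σ hσ).csSup_eq, hIcc, image_image]

theorem IsMaxRate.exists_mul_sub_eq (hμ : Continuous μ) (h0 : μ 0 = 0) (hγ : IsMaxRate μ γ)
    {σ θ : ℝ} (hσ : 0 < σ) (hθ : θ ∈ Icc 0 1) :
    ∃ w ∈ Icc 0 σ, μ w * (σ - w) = θ * γ σ := by
  obtain ⟨s, hs, hs_eq⟩ := (hγ σ hσ).1
  have hγ_nonneg : 0 ≤ γ σ := by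
    simpa [h0] using hγ.mul_sub_le hσ (left_mem_Icc.2 hσ.le)
  obtain ⟨w, hw, hw_eq⟩ := intermediate_value_Icc hs.1
    (f := fun w => μ w * (σ - w)) (by fun_prop)
    ⟨by simpa [h0] using mul_nonneg hθ.1 hγ_nonneg,
      by simpa [hs_eq] using mul_le_of_le_one_left hγ_nonneg hθ.2⟩
  exact ⟨w, ⟨hw.1, hw.2.trans hs.2⟩, hw_eq⟩

end MaxRate

noncomputable def travelTime (γ : ℝ → ℝ) (sb σ : ℝ) : ℝ :=
  ∫ ξ in sb..σ, 1 / γ ξ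

section TravelTime

variable {sb : ℝ}

theorem travelTime_self : travelTime γ sb sb = 0 :=
  intervalIntegral.integral_same

theorem travelTime_nonneg (hpos : ∀ σ > (0:ℝ), 0 < γ σ) (hsb : 0 < sb) {σ : ℝ} (hσ : sb ≤ σ) :
    0 ≤ travelTime γ sb σ :=
  intervalIntegral.integral_nonneg hσ fun ξ hξ => (one_div_pos.2 (hpos ξ (hsb.trans_le hξ.1))).le

theorem travelTime_nonpos (hpos : ∀ σ > (0:ℝ), 0 < γ σ) {σ : ℝ} (h0σ : 0 ≤ σ) (hσ : σ ≤ sb) :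
    travelTime γ sb σ ≤ 0 := by
  rw [travelTime, intervalIntegral.integral_symm, intervalIntegral.integral_of_le hσ, neg_nonpos]
  exact setIntegral_nonneg measurableSet_Ioc fun ξ hξ =>
    (one_div_pos.2 (hpos ξ (h0σ.trans_lt hξ.1))).le

theorem max_zero_travelTime (hpos : ∀ σ > (0:ℝ), 0 < γ σ) (hsb : 0 < sb) {σ : ℝ} (hσ : 0 ≤ σ) :
    max 0 (travelTime γ sb σ) = travelTime γ sb (max σ sb) := by
  rcases le_total σ sb with h | h
  · rw [max_eq_right h, travelTime_self, max_eq_left (travelTime_nonpos hpos hσ h)]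
  · rw [max_eq_left h, max_eq_right (travelTime_nonneg hpos hsb h)]

theorem hasDerivAt_travelTime (hpos : ∀ σ > (0:ℝ), 0 < γ σ) (hcont : ContinuousOn γ (Ioi 0))
    (hsb : 0 < sb) {σ : ℝ} (hσ : 0 < σ) : HasDerivAt (travelTime γ sb) (1 / γ σ) σ := by
  have hc : ContinuousOn (fun ξ => 1 / γ ξ) (Ioi 0) :=
    continuousOn_const.div hcont fun ξ hξ => (hpos ξ hξ).ne'
  have hsub : uIcc sb σ ⊆ Ioi 0 := fun ξ hξ => (lt_min hsb hσ).trans_le hξ.1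
  exact intervalIntegral.integral_hasDerivAt_right ((hc.mono hsub).intervalIntegrable)
    (hc.stronglyMeasurableAtFilter isOpen_Ioi σ hσ) (hc.continuousAt (Ioi_mem_nhds hσ))

theorem strictMonoOn_travelTime (hpos : ∀ σ > (0:ℝ), 0 < γ σ) (hcont : ContinuousOn γ (Ioi 0))
    (hsb : 0 < sb) : StrictMonoOn (travelTime γ sb) (Ioi 0) := by
  have hderiv := fun σ (hσ : σ ∈ Ioi (0:ℝ)) => hasDerivAt_travelTime hpos hcont hsb hσ
  refine strictMonoOn_of_hasDerivWithinAt_pos (f' := fun σ => 1 / γ σ) (convex_Ioi 0)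
    (fun σ hσ => (hderiv σ hσ).continuousAt.continuousWithinAt) (fun σ hσ => ?_) (fun σ hσ => ?_)
  · rw [interior_Ioi] at hσ ⊢
    exact (hderiv σ hσ).hasDerivWithinAt
  · rw [interior_Ioi] at hσ
    exact one_div_pos.2 (hpos σ hσ)

theorem continuous_travelTime_max (hpos : ∀ σ > (0:ℝ), 0 < γ σ) (hcont : ContinuousOn γ (Ioi 0))
    (hsb : 0 < sb) : Continuous fun σ => travelTime γ sb (max σ sb) :=
  continuous_iff_continuousAt.2 fun σ =>
    (hasDerivAt_travelTime hpos hcont hsb (lt_max_of_lt_right hsb : 0 < max σ sb)).continuousAt.comp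
      (f := fun σ => max σ sb) (continuous_id.max continuous_const).continuousAt

end TravelTime

def LowerRightDiniGE (f : ℝ → ℝ) (L x : ℝ) : Prop :=
  ∀ L' < L, ∀ᶠ z in 𝓝[>] x, L' < slope f x z

section Dini

variable {f g : ℝ → ℝ} {f' L L₁ L₂ x : ℝ}

theorem lowerRightDiniGE_of_hasDerivAt (hf : HasDerivAt f f' x) (hL : L ≤ f') :
    LowerRightDiniGE f L x := fun _ hL' =>
  ((hasDerivAt_iff_tendsto_slope.1 hf).mono_left
    (nhdsWithin_mono _ fun _ hz => (ne_of_gt hz : _))).eventually_const_lt (hL'.trans_le hL)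

theorem lowerRightDiniGE_of_le (h : ∀ z, x < z → f x ≤ f z) (hL : L ≤ 0) :
    LowerRightDiniGE f L x := fun _ hL' =>
  eventually_nhdsWithin_of_forall fun z (hz : x < z) => by
    rw [slope_def_field]
    exact hL'.trans_le (hL.trans (div_nonneg (sub_nonneg.2 (h z hz)) (sub_nonneg.2 hz.le)))

theorem LowerRightDiniGE.add (hf : LowerRightDiniGE f L₁ x) (hg : LowerRightDiniGE g L₂ x) :
    LowerRightDiniGE (fun z => f z + g z) (L₁ + L₂) x := by
  intro L' hL'
  filter_upwards [hf (L₁ - (L₁ + L₂ - L') / 2) (by linarith),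
    hg (L₂ - (L₁ + L₂ - L') / 2) (by linarith)] with z hfz hgz
  have : slope (fun z => f z + g z) x z = slope f x z + slope g x z := by
    simp only [slope_def_field]; ring
  linarith

theorem le_of_lowerRightDiniGE_zero {a b : ℝ} (hf : ContinuousOn f (Icc a b)) (hab : a ≤ b)
    (hD : ∀ x ∈ Ico a b, LowerRightDiniGE f 0 x) : f a ≤ f b := by
  have := image_le_of_liminf_slope_right_le_deriv_boundary (f := fun z => -f z)
    (B := fun _ => -f a) (B' := fun _ => 0) hf.neg le_rfl continuousOn_const
    (fun _ _ => hasDerivWithinAt_const _ _ _) (fun x hx r hr =>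
      ((hD x hx (-r) (neg_lt_zero.2 hr)).mono fun z hz => by rw [slope_neg]; linarith).frequently)
    (right_mem_Icc.2 hab)
  linarith

end Dini

def IsReachingTime (μ : ℝ → ℝ) (r sb x₁ x₂ t : ℝ) : Prop :=
  ∃ s₁ s₂ a sst : ℝ → ℝ,
    s₁ 0 = x₁ ∧ s₂ 0 = x₂ ∧
    (∀ τ, a τ ∈ Icc (0:ℝ) 1) ∧
    (∀ τ, sst τ ∈ Icc (0:ℝ) (a τ * s₁ τ + (1 - a τ) * s₂ τ)) ∧
    (∀ τ, HasDerivAt s₁ (-(a τ / r) * (μ (sst τ) * (s₁ τ - sst τ))) τ) ∧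
    (∀ τ, HasDerivAt s₂ (-((1 - a τ) / (1 - r)) * (μ (sst τ) * (s₂ τ - sst τ))) τ) ∧
    max (s₁ t) (s₂ t) ≤ sb

section LowerBound

variable {sb : ℝ}

-- Below `sb` the clamped travel time vanishes and can only grow. Clamping at `sb` also keeps `γ`
-- away from nonpositive arguments, where it is unconstrained.
theorem lowerRightDiniGE_travelTime_max (hmono : StrictMonoOn μ (Ici 0)) (h0 : μ 0 = 0)
    (hγ : IsMaxRate μ γ) (hcont : ContinuousOn γ (Ioi 0)) (hsb : 0 < sb) {s : ℝ → ℝ}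
    {ρ c w x : ℝ} (hρ : 0 < ρ) (hc : 0 ≤ c) (hw : 0 ≤ w)
    (hs : HasDerivAt s (-(c / ρ) * (μ w * (s x - w))) x) :
    LowerRightDiniGE (fun τ => ρ * travelTime γ sb (max (s τ) sb)) (-c) x := by
  have hpos := fun σ (hσ : σ > 0) => hγ.pos hmono h0 hσ
  rcases le_or_gt (s x) sb with hx | hx
  · refine lowerRightDiniGE_of_le (fun z _ => ?_) (neg_nonpos.2 hc)
    rw [max_eq_right hx, travelTime_self, mul_zero]
    exact mul_nonneg hρ.le (travelTime_nonneg hpos hsb (le_max_right _ _))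
  · have hsx : 0 < s x := hsb.trans hx
    have hev : (fun τ => ρ * travelTime γ sb (max (s τ) sb)) =ᶠ[𝓝 x]
        fun τ => ρ * travelTime γ sb (s τ) :=
      (hs.continuousAt.eventually (lt_mem_nhds hx)).mono fun τ hτ => by
        simp only [max_eq_left hτ.le]
    refine lowerRightDiniGE_of_hasDerivAt
      ((((hasDerivAt_travelTime hpos hcont hsb hsx).comp x hs).const_mul ρ).congr_of_eventuallyEq
        hev) ?_
    have hq := hγ.mul_sub_le_of_nonneg hmono h0 hsx hw
    have hγx := hpos _ hsx
    calc -c ≤ -c * (μ w * (s x - w) / γ (s x)) := by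
          nlinarith [(div_le_one hγx).2 hq]
      _ = _ := by field_simp

theorem IsReachingTime.le (hmono : StrictMonoOn μ (Ici 0)) (h0 : μ 0 = 0) (hγ : IsMaxRate μ γ)
    (hcont : ContinuousOn γ (Ioi 0)) (hsb : 0 < sb) {r x₁ x₂ t : ℝ} (hr : r ∈ Ioo (0:ℝ) 1)
    (hx₁ : 0 ≤ x₁) (hx₂ : 0 ≤ x₂) (ht : 0 ≤ t) (h : IsReachingTime μ r sb x₁ x₂ t) :
    r * max 0 (travelTime γ sb x₁) + (1 - r) * max 0 (travelTime γ sb x₂) ≤ t := by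
  obtain ⟨s₁, s₂, a, sst, h₁0, h₂0, ha, hsst, hd₁, hd₂, htarget⟩ := h
  have hpos := fun σ (hσ : σ > 0) => hγ.pos hmono h0 hσ
  set Ψ := fun τ => r * travelTime γ sb (max (s₁ τ) sb) +
    (1 - r) * travelTime γ sb (max (s₂ τ) sb) + τ
  have hΨ : Continuous Ψ := by
    have hT := continuous_travelTime_max hpos hcont hsb
    have hs₁ : Continuous s₁ := continuous_iff_continuousAt.2 fun τ => (hd₁ τ).continuousAt
    have hs₂ : Continuous s₂ := continuous_iff_continuousAt.2 fun τ => (hd₂ τ).continuousAt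
    exact ((continuous_const.mul (hT.comp hs₁)).add (continuous_const.mul (hT.comp hs₂))).add
      continuous_id
  -- The weights `r` and `1 - r` cancel the volume factors, and `a + (1 - a) = 1`.
  have hD : ∀ τ, LowerRightDiniGE Ψ 0 τ := fun τ => by
    have h₁ := lowerRightDiniGE_travelTime_max hmono h0 hγ hcont hsb hr.1 (ha τ).1 (hsst τ).1
      (hd₁ τ)
    have h₂ := lowerRightDiniGE_travelTime_max hmono h0 hγ hcont hsb (sub_pos.2 hr.2)
      (sub_nonneg.2 (ha τ).2) (hsst τ).1 (hd₂ τ)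
    have h₃ := lowerRightDiniGE_of_hasDerivAt (hasDerivAt_id' τ) le_rfl
    convert (h₁.add h₂).add h₃ using 1
    ring
  have := le_of_lowerRightDiniGE_zero hΨ.continuousOn ht fun τ _ => hD τ
  simpa [Ψ, h₁0, h₂0, max_zero_travelTime hpos hsb hx₁, max_zero_travelTime hpos hsb hx₂,
    max_eq_right (le_of_max_le_left htarget), max_eq_right (le_of_max_le_right htarget),
    travelTime_self] using this

end LowerBound

section Inverse

variable {f : ℝ → ℝ} {a b : ℝ}

theorem invFunOn_Icc_mem_and_apply (hf : ContinuousOn f (Icc a b)) (hab : a ≤ b) {y : ℝ}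
    (hy : y ∈ Icc (f a) (f b)) :
    Function.invFunOn f (Icc a b) y ∈ Icc a b ∧ f (Function.invFunOn f (Icc a b) y) = y :=
  Function.invFunOn_pos (intermediate_value_Icc hab hf hy)

theorem hasDerivAt_invFunOn_Icc (hmono : StrictMonoOn f (Icc a b)) (hf : ContinuousOn f (Icc a b))
    (hab : a ≤ b) {y f' : ℝ} (hy : y ∈ Ioo (f a) (f b))
    (hderiv : HasDerivAt f f' (Function.invFunOn f (Icc a b) y)) (hf' : f' ≠ 0) :
    HasDerivAt (Function.invFunOn f (Icc a b)) f'⁻¹ y := by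
  set g := Function.invFunOn f (Icc a b)
  have hinv : ∀ z ∈ Ioo (f a) (f b), g z ∈ Icc a b ∧ f (g z) = z := fun z hz =>
    invFunOn_Icc_mem_and_apply hf hab (Ioo_subset_Icc_self hz)
  have hg_mono : MonotoneOn g (Ioo (f a) (f b)) := fun z hz z' hz' hzz' => by
    rw [← hmono.le_iff_le (hinv z hz).1 (hinv z' hz').1, (hinv z hz).2, (hinv z' hz').2]
    exact hzz'
  have himage : Ioo a b ⊆ g '' Ioo (f a) (f b) := fun x hx =>
    ⟨f x, ⟨hmono (left_mem_Icc.2 hab) (Ioo_subset_Icc_self hx) hx.1,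
      hmono (Ioo_subset_Icc_self hx) (right_mem_Icc.2 hab) hx.2⟩,
      hmono.injOn.leftInvOn_invFunOn (Ioo_subset_Icc_self hx)⟩
  obtain ⟨⟨hga, hgb⟩, hfg⟩ := hinv y hy
  have hgy : g y ∈ Ioo a b :=
    ⟨hga.lt_of_ne fun h => hy.1.ne (by rw [h, hfg]),
      hgb.lt_of_ne fun h => hy.2.ne' (by rw [← h, hfg])⟩
  refine HasDerivAt.of_local_left_inverse ?_ hderiv hf'
    (eventually_of_mem (Ioo_mem_nhds hy.1 hy.2) fun z hz => (hinv z hz).2)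
  exact continuousAt_of_monotoneOn_of_image_mem_nhds hg_mono (Ioo_mem_nhds hy.1 hy.2)
    (mem_of_superset (Ioo_mem_nhds hgy.1 hgy.2) himage)

end Inverse

noncomputable def ramp (δ u : ℝ) : ℝ := max 0 (min 1 (u / δ))

noncomputable def smoothClamp (δ L τ : ℝ) : ℝ := ∫ u in (τ - L)..τ, ramp δ u

section SmoothClamp

variable {δ L τ : ℝ}

theorem continuous_ramp : Continuous (ramp δ) := by
  unfold ramp; fun_prop

theorem monotone_ramp (hδ : 0 < δ) : Monotone (ramp δ) := fun _ _ h =>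
  max_le_max le_rfl (min_le_min le_rfl (div_le_div_of_nonneg_right h hδ.le))

theorem ramp_mem_Icc (u : ℝ) : ramp δ u ∈ Icc 0 1 :=
  ⟨le_max_left _ _, max_le zero_le_one (min_le_left _ _)⟩

theorem ramp_of_nonpos (hδ : 0 < δ) {u : ℝ} (hu : u ≤ 0) : ramp δ u = 0 :=
  max_eq_left ((min_le_right _ _).trans (div_nonpos_of_nonpos_of_nonneg hu hδ.le))

theorem ramp_of_le (hδ : 0 < δ) {u : ℝ} (hu : δ ≤ u) : ramp δ u = 1 := by
  rw [ramp, min_eq_left ((one_le_div hδ).2 hu), max_eq_right zero_le_one]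

theorem hasDerivAt_smoothClamp (δ L τ : ℝ) :
    HasDerivAt (smoothClamp δ L) (ramp δ τ - ramp δ (τ - L)) τ := by
  have hc : Continuous (ramp δ) := continuous_ramp
  have h : smoothClamp δ L = fun τ => (∫ u in 0..τ, ramp δ u) - ∫ u in 0..(τ - L), ramp δ u :=
    funext fun τ => (intervalIntegral.integral_interval_sub_left
      (hc.intervalIntegrable _ _) (hc.intervalIntegrable _ _)).symm
  rw [h]
  exact (hc.integral_hasStrictDerivAt 0 τ).hasDerivAt.sub
    ((hc.integral_hasStrictDerivAt 0 (τ - L)).hasDerivAt.comp_sub_const τ L)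

theorem ramp_sub_ramp_mem_Icc (hδ : 0 < δ) (hL : 0 ≤ L) (τ : ℝ) :
    ramp δ τ - ramp δ (τ - L) ∈ Icc 0 1 :=
  ⟨sub_nonneg.2 (monotone_ramp hδ (by linarith)),
    by linarith [(ramp_mem_Icc (δ := δ) τ).2, (ramp_mem_Icc (δ := δ) (τ - L)).1]⟩

theorem ramp_sub_ramp_eq_zero (hδ : 0 < δ) (hL : 0 ≤ L) (hτ : τ < 0 ∨ L + δ ≤ τ) :
    ramp δ τ - ramp δ (τ - L) = 0 := by
  rcases hτ with hτ | hτ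
  · rw [ramp_of_nonpos hδ hτ.le, ramp_of_nonpos hδ (by linarith), sub_self]
  · rw [ramp_of_le hδ (by linarith), ramp_of_le hδ (by linarith), sub_self]

theorem smoothClamp_of_nonpos (hδ : 0 < δ) (hL : 0 ≤ L) (hτ : τ ≤ 0) : smoothClamp δ L τ = 0 := by
  rw [smoothClamp, intervalIntegral.integral_congr (g := fun _ => 0) fun u hu => ?_,
    intervalIntegral.integral_zero]
  rw [uIcc_of_le (by linarith)] at hu
  exact ramp_of_nonpos hδ (hu.2.trans hτ)

theorem smoothClamp_of_le (hδ : 0 < δ) (hL : 0 ≤ L) (hτ : L + δ ≤ τ) : smoothClamp δ L τ = L := by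
  rw [smoothClamp, intervalIntegral.integral_congr (g := fun _ => 1) fun u hu => ?_,
    intervalIntegral.integral_const, smul_eq_mul, mul_one, sub_sub_cancel]
  rw [uIcc_of_le (by linarith)] at hu
  exact ramp_of_le hδ (by linarith [hu.1])

theorem smoothClamp_mem_Icc (hδ : 0 < δ) (hL : 0 ≤ L) (τ : ℝ) : smoothClamp δ L τ ∈ Icc 0 L := by
  have hmono : Monotone (smoothClamp δ L) := monotone_of_hasDerivAt_nonneg
    (hasDerivAt_smoothClamp δ L) fun τ => (ramp_sub_ramp_mem_Icc hδ hL τ).1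
  constructor
  · calc 0 = smoothClamp δ L (min τ 0) := (smoothClamp_of_nonpos hδ hL (min_le_right _ _)).symm
      _ ≤ smoothClamp δ L τ := hmono (min_le_left _ _)
  · calc smoothClamp δ L τ ≤ smoothClamp δ L (max τ (L + δ)) := hmono (le_max_left _ _)
      _ = L := smoothClamp_of_le hδ hL (le_max_right _ _)

end SmoothClamp

-- One zone of volume fraction `ρ`, treated alone on `[0, t]` and idle before and after.
structure IsDescent (μ : ℝ → ℝ) (ρ sb x t : ℝ) (S w : ℝ → ℝ) : Prop where
  eq_start : ∀ τ ≤ 0, S τ = x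
  le_target : ∀ τ, t ≤ τ → S τ ≤ sb
  mem_Icc : ∀ τ, w τ ∈ Icc 0 (S τ)
  hasDerivAt : ∀ τ, HasDerivAt S (-(1 / ρ) * (μ (w τ) * (S τ - w τ))) τ
  rate_eq_zero : ∀ τ, τ < 0 ∨ t ≤ τ → μ (w τ) * (S τ - w τ) = 0

section UpperBound

variable {sb : ℝ}

theorem isDescent_const {ρ x : ℝ} (hx : 0 ≤ x) (hxsb : x ≤ sb) :
    IsDescent μ ρ sb x 0 (fun _ => x) (fun _ => x) :=
  ⟨fun _ _ => rfl, fun _ _ => hxsb, fun _ => ⟨hx, le_rfl⟩,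
    fun τ => by simpa using hasDerivAt_const τ x, fun _ _ => by simp⟩

-- Run the travel-time clock `G = travelTime γ sb` backwards at speed `φ / ρ`, where the profile
-- `φ = (smoothClamp δ (ρ G x))'` rises from `0` to `1` and falls back; the treatment rate
-- `φ γ(S)` is then attainable at every instant.
theorem exists_isDescent_of_lt (hμ : Continuous μ) (hmono : StrictMonoOn μ (Ici 0))
    (h0 : μ 0 = 0) (hγ : IsMaxRate μ γ) (hsb : 0 < sb) {ρ x δ : ℝ} (hρ : 0 < ρ) (hx : sb < x)
    (hδ : 0 < δ) : ∃ S w, IsDescent μ ρ sb x (ρ * travelTime γ sb x + δ) S w := by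
  have hpos := fun σ (hσ : σ > 0) => hγ.pos hmono h0 hσ
  have hcont := hγ.continuousOn hμ
  set G := travelTime γ sb
  have hGmono := strictMonoOn_travelTime hpos hcont hsb
  have hGsb : G sb = 0 := travelTime_self
  set Δ := G x
  have hΔ : 0 < Δ := hGsb ▸ hGmono hsb (hsb.trans hx) hx
  set L := ρ * Δ
  have hL : 0 ≤ L := by positivity
  have hI : Icc (sb / 2) (x + 1) ⊆ Ioi 0 := fun σ hσ => by
    simp only [mem_Ioi]; linarith [hσ.1]
  have hGI := hGmono.mono hI
  have hGc : ContinuousOn G (Icc (sb / 2) (x + 1)) := fun σ hσ =>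
    (hasDerivAt_travelTime hpos hcont hsb (hI hσ)).continuousAt.continuousWithinAt
  set g := Function.invFunOn G (Icc (sb / 2) (x + 1))
  have hleft : ∀ σ ∈ Icc (sb / 2) (x + 1), g (G σ) = σ := hGI.injOn.leftInvOn_invFunOn
  set y := fun τ => Δ - smoothClamp δ L τ / ρ
  have hy : ∀ τ, y τ ∈ Ioo (G (sb / 2)) (G (x + 1)) := fun τ => by
    have h := smoothClamp_mem_Icc hδ hL τ
    have h1 : G (sb / 2) < 0 := hGsb ▸ hGmono (half_pos hsb) hsb (half_lt_self hsb)
    have h2 : Δ < G (x + 1) :=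
      hGmono (hsb.trans hx) (by simp only [mem_Ioi]; linarith) (by linarith)
    have h3 : smoothClamp δ L τ / ρ ≤ Δ := (div_le_iff₀ hρ).2 (by linarith [h.2])
    have h4 : 0 ≤ smoothClamp δ L τ / ρ := div_nonneg h.1 hρ.le
    constructor <;> simp only [y] <;> linarith
  have hS : ∀ τ, g (y τ) ∈ Icc (sb / 2) (x + 1) ∧ G (g (y τ)) = y τ := fun τ =>
    invFunOn_Icc_mem_and_apply hGc (by linarith) (Ioo_subset_Icc_self (hy τ))
  have hSpos : ∀ τ, 0 < g (y τ) := fun τ => hI (hS τ).1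
  choose w hw hw_eq using fun τ =>
    hγ.exists_mul_sub_eq hμ h0 (hSpos τ) (ramp_sub_ramp_mem_Icc hδ hL τ)
  refine ⟨fun τ => g (y τ), w, ⟨fun τ hτ => ?_, fun τ hτ => ?_, hw, fun τ => ?_, fun τ hτ => ?_⟩⟩
  · have : y τ = G x := by simp only [y, smoothClamp_of_nonpos hδ hL hτ, zero_div, sub_zero, Δ]
    simp only [this, hleft x ⟨by linarith, by linarith⟩]
  · have : y τ = G sb := by
      simp only [y, smoothClamp_of_le hδ hL hτ, hGsb, L]
      field_simp
      ring
    simp only [this, hleft sb ⟨by linarith, by linarith⟩, le_refl]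
  · have hg := hasDerivAt_invFunOn_Icc hGI hGc (by linarith) (hy τ)
      (hasDerivAt_travelTime hpos hcont hsb (hSpos τ)) (one_div_pos.2 (hpos _ (hSpos τ))).ne'
    have hyd := ((hasDerivAt_smoothClamp δ L τ).div_const ρ).const_sub Δ
    refine (hg.comp τ hyd).congr_deriv ?_
    rw [hw_eq]
    field_simp
    ring
  · rw [hw_eq, ramp_sub_ramp_eq_zero hδ hL hτ, zero_mul]

theorem exists_isDescent (hμ : Continuous μ) (hmono : StrictMonoOn μ (Ici 0)) (h0 : μ 0 = 0)
    (hγ : IsMaxRate μ γ) (hsb : 0 < sb) {ρ x ε : ℝ} (hρ : 0 < ρ) (hx : 0 ≤ x) (hε : 0 < ε) :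
    ∃ t S w, 0 ≤ t ∧ t ≤ ρ * max 0 (travelTime γ sb x) + ε ∧ IsDescent μ ρ sb x t S w := by
  rcases le_or_gt x sb with hxsb | hxsb
  · exact ⟨0, _, _, le_rfl, by positivity, isDescent_const hx hxsb⟩
  · obtain ⟨S, w, h⟩ := exists_isDescent_of_lt hμ hmono h0 hγ hsb hρ hxsb hε
    have := travelTime_nonneg (fun σ hσ => hγ.pos hmono h0 hσ) hsb hxsb.le
    exact ⟨_, S, w, by positivity, by rw [max_eq_right this], h⟩

theorem IsDescent.isReachingTime {r x₁ x₂ t₁ t₂ : ℝ} {S₁ S₂ w₁ w₂ : ℝ → ℝ}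
    (h₁ : IsDescent μ r sb x₁ t₁ S₁ w₁) (h₂ : IsDescent μ (1 - r) sb x₂ t₂ S₂ w₂)
    (ht₁ : 0 ≤ t₁) (ht₂ : 0 ≤ t₂) : IsReachingTime μ r sb x₁ x₂ (t₁ + t₂) := by
  refine ⟨S₁, fun τ => S₂ (τ - t₁), fun τ => if τ < t₁ then 1 else 0,
    fun τ => if τ < t₁ then w₁ τ else w₂ (τ - t₁), h₁.eq_start 0 le_rfl,
    h₂.eq_start _ (by linarith), fun τ => ?_, fun τ => ?_, fun τ => ?_, fun τ => ?_,
    max_le (h₁.le_target _ (by linarith)) (h₂.le_target _ (by linarith))⟩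
  · dsimp only; split_ifs <;> norm_num
  · dsimp only; split_ifs
    · simpa using h₁.mem_Icc τ
    · simpa using h₂.mem_Icc (τ - t₁)
  · dsimp only; split_ifs with hτ
    · simpa using h₁.hasDerivAt τ
    · simpa [h₁.rate_eq_zero τ (Or.inr (not_lt.1 hτ))] using h₁.hasDerivAt τ
  · have h := (h₂.hasDerivAt (τ - t₁)).comp_sub_const τ t₁
    dsimp only; split_ifs with hτ
    · simpa [h₂.rate_eq_zero _ (Or.inl (sub_neg.2 hτ))] using h
    · simpa using h

theorem exists_isReachingTime_le (hμ : Continuous μ) (hmono : StrictMonoOn μ (Ici 0))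
    (h0 : μ 0 = 0) (hγ : IsMaxRate μ γ) (hsb : 0 < sb) {r x₁ x₂ ε : ℝ} (hr : r ∈ Ioo (0:ℝ) 1)
    (hx₁ : 0 ≤ x₁) (hx₂ : 0 ≤ x₂) (hε : 0 < ε) :
    ∃ t ∈ {t | 0 ≤ t ∧ IsReachingTime μ r sb x₁ x₂ t},
      t ≤ r * max 0 (travelTime γ sb x₁) + (1 - r) * max 0 (travelTime γ sb x₂) + ε := by
  obtain ⟨t₁, S₁, w₁, ht₁, ht₁le, h₁⟩ := exists_isDescent hμ hmono h0 hγ hsb hr.1 hx₁ (half_pos hε)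
  obtain ⟨t₂, S₂, w₂, ht₂, ht₂le, h₂⟩ :=
    exists_isDescent hμ hmono h0 hγ hsb (sub_pos.2 hr.2) hx₂ (half_pos hε)
  exact ⟨t₁ + t₂, ⟨by linarith, h₁.isReachingTime h₂ ht₁ ht₂⟩, by linarith⟩

end UpperBound

end Depollution

open Depollution

theorem stmt16_general (μ γ : ℝ → ℝ) (r sb : ℝ)
    (hr : r ∈ Set.Ioo (0:ℝ) 1) (hsb : 0 < sb)
    (hC1 : ContDiff ℝ 1 μ) (hmono : StrictMonoOn μ (Set.Ici 0))
    (h0 : μ 0 = 0)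
    (hγ : ∀ σ > (0:ℝ), IsGreatest ((fun s : ℝ => μ s * (σ - s)) '' Set.Icc 0 σ) (γ σ))
    (T : ℝ → ℝ) (hT : ∀ σ, T σ = max 0 (∫ ξ in sb..σ, 1 / γ ξ)) :
    ∀ x₁ x₂ : ℝ, 0 ≤ x₁ → 0 ≤ x₂ →
      sInf {t : ℝ | 0 ≤ t ∧ ∃ s₁ s₂ a sst : ℝ → ℝ,
        s₁ 0 = x₁ ∧ s₂ 0 = x₂ ∧
        (∀ τ, a τ ∈ Set.Icc (0:ℝ) 1) ∧
        (∀ τ, sst τ ∈ Set.Icc (0:ℝ) (a τ * s₁ τ + (1 - a τ) * s₂ τ)) ∧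
        (∀ τ, HasDerivAt s₁ (-(a τ / r) * (μ (sst τ) * (s₁ τ - sst τ))) τ) ∧
        (∀ τ, HasDerivAt s₂ (-((1 - a τ) / (1 - r)) * (μ (sst τ) * (s₂ τ - sst τ))) τ) ∧
        max (s₁ t) (s₂ t) ≤ sb}
      = r * T x₁ + (1 - r) * T x₂ := by
  intro x₁ x₂ hx₁ hx₂
  have hμ : Continuous μ := hC1.continuous
  have hT' : ∀ σ, T σ = max 0 (travelTime γ sb σ) := hT
  change sInf {t | 0 ≤ t ∧ IsReachingTime μ r sb x₁ x₂ t} = _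
  rw [hT', hT']
  obtain ⟨t₀, ht₀, -⟩ := exists_isReachingTime_le hμ hmono h0 hγ hsb hr hx₁ hx₂ one_pos
  refine csInf_eq_of_forall_ge_of_forall_gt_exists_lt ⟨t₀, ht₀⟩
    (fun t ht => ht.2.le hmono h0 hγ (IsMaxRate.continuousOn hμ hγ) hsb hr hx₁ hx₂ ht.1)
    fun v hv => ?_
  obtain ⟨t, ht, hle⟩ :=
    exists_isReachingTime_le hμ hmono h0 hγ hsb hr hx₁ hx₂ (half_pos (sub_pos.2 hv))
  exact ⟨t, ht, by linarith⟩

/-- For d = 0, the minimal-time function of the reduced problem equals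
    V₀(x) = r T(x₁) + (1-r) T(x₂) with T(σ) = max(0, ∫_{s̲}^σ dξ/γ(ξ)). -/
theorem stmt16 (μ γ : ℝ → ℝ) (r sb : ℝ)
    (hr : r ∈ Set.Ioo (0:ℝ) 1) (hsb : 0 < sb)
    (hC1 : ContDiff ℝ 1 μ) (hmono : StrictMonoOn μ (Set.Ici 0))
    (hconc : ConcaveOn ℝ (Set.Ici 0) μ) (h0 : μ 0 = 0)
    (hγ : ∀ σ > (0:ℝ), IsGreatest ((fun s : ℝ => μ s * (σ - s)) '' Set.Icc 0 σ) (γ σ))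
    (T : ℝ → ℝ) (hT : ∀ σ, T σ = max 0 (∫ ξ in sb..σ, 1 / γ ξ)) :
    ∀ x₁ x₂ : ℝ, 0 ≤ x₁ → 0 ≤ x₂ →
      sInf {t : ℝ | 0 ≤ t ∧ ∃ s₁ s₂ a sst : ℝ → ℝ,
        s₁ 0 = x₁ ∧ s₂ 0 = x₂ ∧
        (∀ τ, a τ ∈ Set.Icc (0:ℝ) 1) ∧
        (∀ τ, sst τ ∈ Set.Icc (0:ℝ) (a τ * s₁ τ + (1 - a τ) * s₂ τ)) ∧
        (∀ τ, HasDerivAt s₁ (-(a τ / r) * (μ (sst τ) * (s₁ τ - sst τ))) τ) ∧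
        (∀ τ, HasDerivAt s₂ (-((1 - a τ) / (1 - r)) * (μ (sst τ) * (s₂ τ - sst τ))) τ) ∧
        max (s₁ t) (s₂ t) ≤ sb}
      = r * T x₁ + (1 - r) * T x₂ :=
  stmt16_general μ γ r sb hr hsb hC1 hmono h0 hγ T hT
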